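/- arXiv:2311.14072 — 6 statements merged into one kernel-verified Lean document; each statement's English description precedes it below -/
import Mathlib

section
/- The function G_λ satisfies the Lipschitz bound |G_λ(z) − G_λ(w)| ≤ (1/2)|z − w| for all z, w ∈ [0,∞). -/
open Real

noncomputable def Gfun (lam z : ℝ) : ℝ :=
  if z ≤ lam then (Real.sqrt (lam^2 - z^2) - z * Real.arccos (z / lam)) / π else 0

/-!
On `[0, λ]` the derivative of `G_λ` is `-arccos (z / λ) / π ∈ [-1/2, 0]`, and `G_λ` vanishes on
`[λ, ∞)`. Hence `G_λ` is antitone and `z ↦ G_λ z + z / 2` is monotone on `[0, ∞)`, which together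
say exactly that `G_λ` is `1/2`-Lipschitz there.
-/

open Set

theorem abs_sub_le_of_antitoneOn_of_monotoneOn_add {α : Type*} [CommRing α] [LinearOrder α]
    [IsStrictOrderedRing α] {f : α → α} {s : Set α} {c : α} (hf : AntitoneOn f s)
    (hfc : MonotoneOn (fun x => f x + c * x) s) {x y : α} (hx : x ∈ s) (hy : y ∈ s) :
    |f x - f y| ≤ c * |x - y| := by
  wlog hxy : x ≤ y generalizing x y
  · rw [abs_sub_comm, abs_sub_comm x]
    exact this hy hx (le_of_not_ge hxy)
  have hdecr : f y ≤ f x := hf hx hy hxy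
  have hincr : f x + c * x ≤ f y + c * y := hfc hx hy hxy
  rw [abs_of_nonneg (sub_nonneg.2 hdecr), abs_of_nonpos (sub_nonpos.2 hxy)]
  linarith

theorem hasDerivAt_sqrt_sq_sub_sq {lam z : ℝ} (hz : |z| < lam) :
    HasDerivAt (fun z => √(lam ^ 2 - z ^ 2)) (-z / √(lam ^ 2 - z ^ 2)) z := by
  have hpos : 0 < lam ^ 2 - z ^ 2 := by
    rw [sub_pos, ← sq_abs z]
    exact pow_lt_pow_left₀ hz (abs_nonneg z) two_ne_zero
  convert ((hasDerivAt_pow 2 z).const_sub (lam ^ 2)).sqrt hpos.ne' using 1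
  field_simp
  ring

theorem hasDerivAt_mul_arccos_div {lam z : ℝ} (hz : |z| < lam) :
    HasDerivAt (fun z => z * arccos (z / lam))
      (arccos (z / lam) - z / √(lam ^ 2 - z ^ 2)) z := by
  have hlam : 0 < lam := (abs_nonneg z).trans_lt hz
  have hz' : |z / lam| < 1 := by rwa [abs_div, abs_of_pos hlam, div_lt_one hlam]
  have hne : z / lam ≠ -1 ∧ z / lam ≠ 1 := by
    constructor <;> rintro h <;> rw [h] at hz' <;> norm_num at hz'
  have hsqrt : √(1 - (z / lam) ^ 2) = √(lam ^ 2 - z ^ 2) / lam := by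
    rw [div_pow, one_sub_div (pow_pos hlam 2).ne', sqrt_div' _ (sq_nonneg lam), sqrt_sq hlam.le]
  have harccos := (hasDerivAt_arccos hne.1 hne.2).comp z ((hasDerivAt_id z).div_const lam)
  refine ((hasDerivAt_id z).mul harccos).congr_deriv ?_
  rw [hsqrt]
  simp only [Function.comp_apply, id]
  field_simp
  ring

noncomputable def GfunFormula (lam z : ℝ) : ℝ :=
  (√(lam ^ 2 - z ^ 2) - z * arccos (z / lam)) / π

theorem hasDerivAt_GfunFormula {lam z : ℝ} (hz : |z| < lam) :
    HasDerivAt (GfunFormula lam) (-arccos (z / lam) / π) z := by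
  refine (((hasDerivAt_sqrt_sq_sub_sq hz).sub (hasDerivAt_mul_arccos_div hz)).div_const π).congr_deriv
    ?_
  ring

theorem continuous_GfunFormula (lam : ℝ) : Continuous (GfunFormula lam) := by
  unfold GfunFormula
  fun_prop

-- `√` of a negative number is `0` and `arccos` vanishes on `[1, ∞)`.
theorem GfunFormula_eq_zero_of_le {lam z : ℝ} (hlam : 0 < lam) (hz : lam ≤ z) :
    GfunFormula lam z = 0 := by
  have hsq : lam ^ 2 - z ^ 2 ≤ 0 := by nlinarith
  rw [GfunFormula, sqrt_eq_zero'.2 hsq, arccos_of_one_le ((one_le_div hlam).2 hz)]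
  simp

theorem Gfun_eq_GfunFormula {lam : ℝ} (hlam : 0 < lam) : Gfun lam = GfunFormula lam := by
  funext z
  unfold Gfun
  split_ifs with hz
  · rfl
  · exact (GfunFormula_eq_zero_of_le hlam (le_of_not_ge hz)).symm

theorem hasDerivWithinAt_GfunFormula_interior_Icc {lam : ℝ} :
    ∀ z ∈ interior (Icc 0 lam),
      HasDerivWithinAt (GfunFormula lam) (-arccos (z / lam) / π) (interior (Icc 0 lam)) z := by
  rw [interior_Icc]
  intro z hz
  exact (hasDerivAt_GfunFormula (by rw [abs_of_pos hz.1]; exact hz.2)).hasDerivWithinAt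

theorem antitoneOn_GfunFormula {lam : ℝ} (hlam : 0 < lam) :
    AntitoneOn (GfunFormula lam) (Ici 0) := by
  rw [← Icc_union_Ici_eq_Ici hlam.le]
  refine AntitoneOn.union_right ?_ ?_ (isGreatest_Icc hlam.le) isLeast_Ici
  · refine antitoneOn_of_hasDerivWithinAt_nonpos (convex_Icc 0 lam)
      (continuous_GfunFormula lam).continuousOn hasDerivWithinAt_GfunFormula_interior_Icc
      fun z _ => ?_
    exact div_nonpos_of_nonpos_of_nonneg (neg_nonpos.2 (arccos_nonneg _)) pi_pos.le
  · intro z hz w hw _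
    rw [GfunFormula_eq_zero_of_le hlam hz, GfunFormula_eq_zero_of_le hlam hw]

theorem monotoneOn_GfunFormula_add_half_mul {lam : ℝ} (hlam : 0 < lam) :
    MonotoneOn (fun z => GfunFormula lam z + 1 / 2 * z) (Ici 0) := by
  rw [← Icc_union_Ici_eq_Ici hlam.le]
  refine MonotoneOn.union_right ?_ ?_ (isGreatest_Icc hlam.le) isLeast_Ici
  · refine monotoneOn_of_hasDerivWithinAt_nonneg (convex_Icc 0 lam)
      ((continuous_GfunFormula lam).add (continuous_const.mul continuous_id)).continuousOn
      (fun z hz => (hasDerivWithinAt_GfunFormula_interior_Icc z hz).add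
        ((hasDerivAt_id z).const_mul (1 / 2)).hasDerivWithinAt) fun z hz => ?_
    rw [interior_Icc] at hz
    have harccos : arccos (z / lam) ≤ π / 2 := arccos_le_pi_div_two.2 (div_nonneg hz.1.le hlam.le)
    have hslope : arccos (z / lam) / π ≤ 1 / 2 := by
      rw [div_le_iff₀ pi_pos]
      linarith
    simp only [mul_one]
    linarith [neg_div π (arccos (z / lam))]
  · intro z hz w hw hzw
    simp only [GfunFormula_eq_zero_of_le hlam hz, GfunFormula_eq_zero_of_le hlam hw]
    linarith

theorem Gfun_lipschitz (lam : ℝ) (hlam : 0 < lam) :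
    ∀ z ∈ Set.Ici (0:ℝ), ∀ w ∈ Set.Ici (0:ℝ),
      |Gfun lam z - Gfun lam w| ≤ (1/2) * |z - w| := by
  intro z hz w hw
  rw [Gfun_eq_GfunFormula hlam]
  exact abs_sub_le_of_antitoneOn_of_monotoneOn_add (antitoneOn_GfunFormula hlam)
    (monotoneOn_GfunFormula_add_half_mul hlam) hz hw
end

section
/- Let λ > 0 and β ∈ [0,λ]. Then ∫_β^λ G_λ(z) dz ≤ (2/5)(λ − β) G_λ(β). -/
open Real

/-! Put `F x = (2/5) (λ - x) G_λ(x) - ∫_x^λ G_λ`, so that `F λ = 0`. Since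
`G_λ' x = -arccos (x/λ) / π`, we get `5 F' x = 3 G_λ(x) - 2 (λ - x) arccos (x/λ) / π`, and the
substitution `x = λ cos θ` turns `F' ≤ 0` into the Cusa–Huygens inequality
`3 sin θ ≤ θ (2 + cos θ)` on `[0, π]`. Hence `F` is antitone and `F β ≥ F λ = 0`. -/

open Set

lemma nonneg_of_hasDerivAt_of_nonneg_deriv {f f' : ℝ → ℝ} {b : ℝ}
    (hf : ∀ x, HasDerivAt f (f' x) x) (hf' : ∀ x ∈ Ioo 0 b, 0 ≤ f' x) (h0 : f 0 = 0) :
    ∀ x ∈ Icc 0 b, 0 ≤ f x := by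
  have hmono : MonotoneOn f (Icc 0 b) :=
    monotoneOn_of_hasDerivWithinAt_nonneg (convex_Icc 0 b)
      (fun x _ ↦ (hf x).continuousAt.continuousWithinAt) (fun x _ ↦ (hf x).hasDerivWithinAt)
      (by simpa only [interior_Icc] using hf')
  intro x hx
  simpa only [h0] using hmono (left_mem_Icc.2 (hx.1.trans hx.2)) hx hx.1

theorem three_mul_sin_le_mul_two_add_cos {θ : ℝ} (hθ : θ ∈ Icc 0 π) :
    3 * sin θ ≤ θ * (2 + cos θ) := by
  have h₂ : ∀ x ∈ Icc 0 π, 0 ≤ sin x - x * cos x := by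
    refine nonneg_of_hasDerivAt_of_nonneg_deriv (f' := fun x ↦ x * sin x) (fun x ↦ ?_)
      (fun x hx ↦ mul_nonneg hx.1.le (sin_nonneg_of_nonneg_of_le_pi hx.1.le hx.2.le)) (by simp)
    exact ((hasDerivAt_sin x).sub ((hasDerivAt_id' x).mul (hasDerivAt_cos x))).congr_deriv
      (by ring)
  have h₁ : ∀ x ∈ Icc 0 π, 0 ≤ 2 - 2 * cos x - x * sin x := by
    refine nonneg_of_hasDerivAt_of_nonneg_deriv (f' := fun x ↦ sin x - x * cos x) (fun x ↦ ?_)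
      (fun x hx ↦ h₂ x (Ioo_subset_Icc_self hx)) (by simp)
    exact ((((hasDerivAt_cos x).const_mul 2).const_sub 2).sub
      ((hasDerivAt_id' x).mul (hasDerivAt_sin x))).congr_deriv (by ring)
  have h₀ : ∀ x ∈ Icc 0 π, 0 ≤ x * (2 + cos x) - 3 * sin x := by
    refine nonneg_of_hasDerivAt_of_nonneg_deriv (f' := fun x ↦ 2 - 2 * cos x - x * sin x)
      (fun x ↦ ?_) (fun x hx ↦ h₁ x (Ioo_subset_Icc_self hx)) (by simp)
    exact (((hasDerivAt_id' x).mul ((hasDerivAt_cos x).const_add 2)).sub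
      ((hasDerivAt_sin x).const_mul 3)).congr_deriv (by ring)
  linarith [h₀ θ hθ]

section Gfun

variable {lam : ℝ}

lemma Gfun_of_le {z : ℝ} (hz : z ≤ lam) :
    Gfun lam z = (√(lam ^ 2 - z ^ 2) - z * arccos (z / lam)) / π :=
  if_pos hz

lemma sqrt_sq_sub_sq_eq_mul_sin_arccos (hlam : 0 < lam) (x : ℝ) :
    √(lam ^ 2 - x ^ 2) = lam * sin (arccos (x / lam)) := by
  have : lam ^ 2 - x ^ 2 = lam ^ 2 * (1 - (x / lam) ^ 2) := by field_simp
  rw [this, sqrt_mul (sq_nonneg _), sqrt_sq hlam.le, sin_arccos]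

lemma continuous_Gfun (hlam : 0 < lam) : Continuous (Gfun lam) := by
  refine Continuous.if_le (by fun_prop) continuous_const continuous_id continuous_const ?_
  rintro z rfl
  simp [div_self hlam.ne']

lemma hasDerivAt_Gfun (hlam : 0 < lam) {x : ℝ} (hx : x ∈ Ioo (-lam) lam) :
    HasDerivAt (Gfun lam) (-arccos (x / lam) / π) x := by
  have hpos : 0 < lam ^ 2 - x ^ 2 := by nlinarith [hx.1, hx.2]
  have hx₁ : x / lam ≠ -1 := by
    rw [Ne, div_eq_iff hlam.ne']; linarith [hx.1]
  have hx₂ : x / lam ≠ 1 := by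
    rw [Ne, div_eq_iff hlam.ne']; linarith [hx.2]
  have hsqrt :
      HasDerivAt (fun y ↦ √(lam ^ 2 - y ^ 2)) (-(2 * x) / (2 * √(lam ^ 2 - x ^ 2))) x := by
    simpa using ((hasDerivAt_pow 2 x).const_sub (lam ^ 2)).sqrt hpos.ne'
  have harccos := (hasDerivAt_arccos hx₁ hx₂).comp x ((hasDerivAt_id x).div_const lam)
  have hformula := (hsqrt.sub ((hasDerivAt_id x).mul harccos)).div_const π
  refine (hformula.congr_deriv ?_).congr_of_eventuallyEq ?_
  · have hs : √(1 - (x / lam) ^ 2) = √(lam ^ 2 - x ^ 2) / lam := by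
      rw [eq_div_iff hlam.ne', sqrt_sq_sub_sq_eq_mul_sin_arccos hlam, sin_arccos, mul_comm]
    have : 0 < √(lam ^ 2 - x ^ 2) := sqrt_pos.2 hpos
    simp only [Function.comp_def, id, hs]
    field_simp
    ring
  · filter_upwards [Iio_mem_nhds hx.2] with y hy using Gfun_of_le hy.le

lemma three_mul_Gfun_le (hlam : 0 < lam) {x : ℝ} (hx : x ∈ Icc (-lam) lam) :
    3 * Gfun lam x ≤ 2 * (lam - x) * arccos (x / lam) / π := by
  rw [Gfun_of_le hx.2, sqrt_sq_sub_sq_eq_mul_sin_arccos hlam]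
  set θ := arccos (x / lam)
  have hcos : x = lam * cos θ := by
    rw [cos_arccos, mul_div_cancel₀ _ hlam.ne']
    · rw [le_div_iff₀ hlam]; linarith [hx.1]
    · rw [div_le_one hlam]; exact hx.2
  have hcusa := three_mul_sin_le_mul_two_add_cos ⟨arccos_nonneg _, arccos_le_pi _⟩ (θ := θ)
  rw [← mul_div_assoc, div_le_div_iff_of_pos_right pi_pos, hcos]
  nlinarith [mul_le_mul_of_nonneg_left hcusa hlam.le]

lemma antitoneOn_two_fifths_mul_Gfun_sub_integral (hlam : 0 < lam) :
    AntitoneOn (fun x ↦ (2/5) * (lam - x) * Gfun lam x - ∫ z in x..lam, Gfun lam z)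
      (Icc (-lam) lam) := by
  have hG := continuous_Gfun hlam
  have htail (x : ℝ) : HasDerivAt (fun u ↦ ∫ z in u..lam, Gfun lam z) (-Gfun lam x) x :=
    intervalIntegral.integral_hasDerivAt_left (hG.intervalIntegrable x lam)
      hG.stronglyMeasurable.stronglyMeasurableAtFilter hG.continuousAt
  refine antitoneOn_of_hasDerivWithinAt_nonpos (convex_Icc _ _)
    (f' := fun x ↦ (3 * Gfun lam x - 2 * (lam - x) * arccos (x / lam) / π) / 5)
    (((by fun_prop : Continuous fun x ↦ (2/5) * (lam - x)).mul hG).sub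
      (continuous_iff_continuousAt.2 fun x ↦ (htail x).continuousAt)).continuousOn
    (fun x hx ↦ ?_) (fun x hx ↦ ?_)
  · rw [interior_Icc] at hx
    exact ((((hasDerivAt_id' x).const_sub lam).const_mul (2/5)).mul
      (hasDerivAt_Gfun hlam hx)).sub (htail x) |>.congr_deriv (by ring) |>.hasDerivWithinAt
  · rw [interior_Icc] at hx
    linarith [three_mul_Gfun_le hlam (Ioo_subset_Icc_self hx)]

end Gfun

theorem integral_Gfun_tail_bound (lam β : ℝ) (hlam : 0 < lam) (hβ : β ∈ Set.Icc 0 lam) :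
    ∫ z in β..lam, Gfun lam z ≤ (2/5) * (lam - β) * Gfun lam β := by
  have := antitoneOn_two_fifths_mul_Gfun_sub_integral hlam ⟨by linarith [hβ.1], hβ.2⟩
    (right_mem_Icc.2 (by linarith)) hβ.2
  simpa using this
end

section
/- The function χ(γ) := arccos γ − 3√(1−γ²)/(γ+2) is nonnegative for all γ ∈ [0,1]. -/
/-!
Substituting `θ = arccos γ` turns the claim into the Cusa–Huygens inequality
`3 sin θ ≤ θ (cos θ + 2)`. The difference `θ (cos θ + 2) - 3 sin θ` and its first two derivatives
vanish at `0`, and its third derivative `θ sin θ` is nonnegative on `[0, π]`; integrating three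
times gives the inequality there. For `θ ≥ π` it is trivial, since then `θ > 3 ≥ 3 sin θ`.
-/

open Real Set

lemma le_of_hasDerivAt_nonneg_on_Icc {f f' : ℝ → ℝ} {a b x : ℝ}
    (hf : ∀ y, HasDerivAt f (f' y) y) (hf' : ∀ y ∈ Icc a b, 0 ≤ f' y) (hx : x ∈ Icc a b) :
    f a ≤ f x :=
  monotoneOn_of_hasDerivWithinAt_nonneg (convex_Icc a b)
    (fun y _ ↦ (hf y).continuousAt.continuousWithinAt)
    (fun y _ ↦ (hf y).hasDerivWithinAt) (fun y hy ↦ hf' y (interior_subset hy))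
    (left_mem_Icc.2 (hx.1.trans hx.2)) hx hx.1

lemma sin_sub_mul_cos_nonneg {x : ℝ} (hx : x ∈ Icc 0 π) : 0 ≤ sin x - x * cos x := by
  have hderiv (y : ℝ) : HasDerivAt (fun y ↦ sin y - y * cos y) (y * sin y) y := by
    refine ((hasDerivAt_sin y).sub ((hasDerivAt_id' y).mul (hasDerivAt_cos y))).congr_deriv ?_
    ring
  simpa using le_of_hasDerivAt_nonneg_on_Icc hderiv
    (fun y hy ↦ mul_nonneg hy.1 (sin_nonneg_of_nonneg_of_le_pi hy.1 hy.2)) hx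

lemma two_sub_two_mul_cos_sub_mul_sin_nonneg {x : ℝ} (hx : x ∈ Icc 0 π) :
    0 ≤ 2 - 2 * cos x - x * sin x := by
  have hderiv (y : ℝ) :
      HasDerivAt (fun y ↦ 2 - 2 * cos y - y * sin y) (sin y - y * cos y) y := by
    refine ((((hasDerivAt_cos y).const_mul 2).const_sub 2).sub
      ((hasDerivAt_id' y).mul (hasDerivAt_sin y))).congr_deriv ?_
    ring
  simpa using le_of_hasDerivAt_nonneg_on_Icc hderiv (fun y hy ↦ sin_sub_mul_cos_nonneg hy) hx

lemma three_mul_sin_le_mul_cos_add_two_of_le_pi {x : ℝ} (hx : x ∈ Icc 0 π) :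
    3 * sin x ≤ x * (cos x + 2) := by
  have hderiv (y : ℝ) :
      HasDerivAt (fun y ↦ y * (cos y + 2) - 3 * sin y) (2 - 2 * cos y - y * sin y) y := by
    refine (((hasDerivAt_id' y).mul ((hasDerivAt_cos y).add_const 2)).sub
      ((hasDerivAt_sin y).const_mul 3)).congr_deriv ?_
    ring
  have hmono := le_of_hasDerivAt_nonneg_on_Icc hderiv
    (fun y hy ↦ two_sub_two_mul_cos_sub_mul_sin_nonneg hy) hx
  simp only [zero_mul, sin_zero, mul_zero, sub_zero] at hmono
  linarith

lemma three_mul_sin_le_mul_cos_add_two {x : ℝ} (hx : 0 ≤ x) : 3 * sin x ≤ x * (cos x + 2) := by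
  rcases le_total x π with hxπ | hπx
  · exact three_mul_sin_le_mul_cos_add_two_of_le_pi ⟨hx, hxπ⟩
  · calc 3 * sin x ≤ 3 := by linarith [sin_le_one x]
      _ ≤ x := by linarith [pi_gt_three]
      _ ≤ x * (cos x + 2) := le_mul_of_one_le_right (by linarith) (by linarith [neg_one_le_cos x])

theorem chi_nonneg :
    ∀ γ ∈ Set.Icc (0:ℝ) 1,
      Real.arccos γ - 3 * Real.sqrt (1 - γ^2) / (γ + 2) ≥ 0 := by
  rintro γ ⟨hγ0, hγ1⟩
  have hcusa := three_mul_sin_le_mul_cos_add_two (arccos_nonneg γ)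
  rw [cos_arccos (by linarith) hγ1, sin_arccos] at hcusa
  rw [ge_iff_le, sub_nonneg, div_le_iff₀ (by linarith)]
  exact hcusa
end

section
/- The function S(z) := −cot z − (2/3)z + 1/z satisfies S''(z) = 2(1/z³ − cos z / sin³ z) > 0 for all z ∈ (0,π). -/
open Real

noncomputable def Sfun (z : ℝ) : ℝ := -Real.cot z - 2 * z / 3 + 1 / z

/-!
Positivity of `S''` on `(0, π)` is the classical inequality `z³ cos z < sin³ z`. It is trivial
where `cos z ≤ 0`; on `(0, π/2)` it follows from the Taylor bounds `z - z³/6 ≤ sin z` and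
`cos z ≤ 1 - z²/2 + z⁴/24`, since `(z - z³/6)³ - z³ (1 - z²/2 + z⁴/24) = z⁷ (9 - z²) / 216`.
-/

namespace Real

lemma cos_le_one_sub_sq_div_two_add_pow_four_div {x : ℝ} (hx : 0 ≤ x) :
    cos x ≤ 1 - x ^ 2 / 2 + x ^ 4 / 24 := by
  set f : ℝ → ℝ := fun y => 1 - y ^ 2 / 2 + y ^ 4 / 24 - cos y
  have hf : ∀ y, HasDerivAt f (sin y - (y - y ^ 3 / 6)) y := fun y =>
    ((((hasDerivAt_id' y).fun_pow 2).div_const 2).const_sub 1 |>.fun_add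
      (((hasDerivAt_id' y).fun_pow 4).div_const 24)).fun_sub (hasDerivAt_cos y) |>.congr_deriv
      (by norm_num; ring)
  have hmono : MonotoneOn f (Set.Ici 0) := by
    refine monotoneOn_of_deriv_nonneg (convex_Ici 0)
      (fun y _ => (hf y).continuousAt.continuousWithinAt)
      (fun y _ => (hf y).differentiableAt.differentiableWithinAt) fun y hy => ?_
    rw [interior_Ici] at hy
    rw [(hf y).deriv]
    linarith [sin_ge_sub_cube hy.le]
  have := hmono Set.self_mem_Ici hx hx
  simp only [f, cos_zero] at this
  linarith

lemma pow_three_mul_cos_lt_sin_pow_three {x : ℝ} (hx₀ : 0 < x) (hxπ : x < π) :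
    x ^ 3 * cos x < sin x ^ 3 := by
  have hsin : 0 < sin x := sin_pos_of_pos_of_lt_pi hx₀ hxπ
  rcases le_or_gt (cos x) 0 with hcos | hcos
  · exact (mul_nonpos_of_nonneg_of_nonpos (by positivity) hcos).trans_lt (by positivity)
  have hx : x < π / 2 := by
    by_contra! h
    exact hcos.not_ge (cos_nonpos_of_pi_div_two_le_of_le h (by linarith [pi_pos]))
  have hx2 : x ^ 2 < 3 := by nlinarith [pi_lt_d2]
  have htaylor : 0 < x - x ^ 3 / 6 := by nlinarith
  calc x ^ 3 * cos x ≤ x ^ 3 * (1 - x ^ 2 / 2 + x ^ 4 / 24) :=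
        mul_le_mul_of_nonneg_left (cos_le_one_sub_sq_div_two_add_pow_four_div hx₀.le) (by positivity)
    _ < (x - x ^ 3 / 6) ^ 3 := by
        nlinarith [mul_pos (pow_pos hx₀ 7) (show (0 : ℝ) < 9 - x ^ 2 by linarith)]
    _ ≤ sin x ^ 3 := pow_le_pow_left₀ htaylor.le (sin_ge_sub_cube hx₀.le) 3

lemma hasDerivAt_cot {x : ℝ} (hx : sin x ≠ 0) : HasDerivAt cot (-(sin x ^ 2)⁻¹) x := by
  rw [show cot = fun y => cos y / sin y from funext cot_eq_cos_div_sin]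
  refine ((hasDerivAt_cos x).fun_div (hasDerivAt_sin x) hx).congr_deriv ?_
  field_simp
  linear_combination -sin_sq_add_cos_sq x

end Real

lemma hasDerivAt_Sfun {z : ℝ} (hz : sin z ≠ 0) :
    HasDerivAt Sfun (1 / sin z ^ 2 - 2 / 3 - 1 / z ^ 2) z := by
  have hz₀ : z ≠ 0 := by rintro rfl; simp at hz
  refine (((hasDerivAt_cot hz).fun_neg.fun_sub (((hasDerivAt_id' z).const_mul 2).div_const 3)).fun_add
    ((hasDerivAt_const z 1).fun_div (hasDerivAt_id' z) hz₀)).congr_deriv ?_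
  field_simp
  ring

lemma hasDerivAt_deriv_Sfun {z : ℝ} (hz : sin z ≠ 0) :
    HasDerivAt (deriv Sfun) (2 * (1 / z ^ 3 - cos z / sin z ^ 3)) z := by
  have hz₀ : z ≠ 0 := by rintro rfl; simp at hz
  have hderiv : deriv Sfun =ᶠ[nhds z] fun y => 1 / sin y ^ 2 - 2 / 3 - 1 / y ^ 2 := by
    filter_upwards [continuous_sin.continuousAt.eventually_ne hz] with y hy
    exact (hasDerivAt_Sfun hy).deriv
  refine HasDerivAt.congr_of_eventuallyEq ?_ hderiv
  refine ((((hasDerivAt_const z 1).fun_div ((hasDerivAt_sin z).fun_pow 2) (pow_ne_zero 2 hz)).sub_const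
    (2 / 3)).fun_sub ((hasDerivAt_const z 1).fun_div ((hasDerivAt_id' z).fun_pow 2)
      (pow_ne_zero 2 hz₀))).congr_deriv ?_
  field_simp
  ring

theorem Sfun_second_deriv :
    ∀ z ∈ Set.Ioo (0:ℝ) π,
      deriv (deriv Sfun) z = 2 * (1 / z^3 - Real.cos z / (Real.sin z)^3) ∧
        0 < deriv (deriv Sfun) z := by
  rintro z ⟨hz₀, hzπ⟩
  have hsin : 0 < sin z := sin_pos_of_pos_of_lt_pi hz₀ hzπ
  rw [(hasDerivAt_deriv_Sfun hsin.ne').deriv]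
  refine ⟨rfl, ?_⟩
  have hlt : cos z / sin z ^ 3 < 1 / z ^ 3 := by
    rw [div_lt_div_iff₀ (by positivity) (by positivity)]
    linarith [pow_three_mul_cos_lt_sin_pow_three hz₀ hzπ]
  linarith
end

section
/- Let i, j ∈ ℤ with i < j, let α ∈ [0, 1/2], let n ∈ ℤ, and let g be a decreasing convex function on [i, j+1] satisfying |g(z) − g(w)| ≤ (1/2)|z − w| for all z, w ∈ [i, j+1]. Assume n+1 ≥ g(i+1) ≥ g(j) ≥ n ≥ g(j+1), and that Z := min{z ∈ [i, j+1] : g(z) = n} satisfies Z < j+1. Then ∑_{m=i}^{j−1} (⌊g(m+α) + 1/4⌋ + ⌊g(m+1−α) + 1/4⌋) ≤ 2∫_i^j g(z) dz. -/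
/-!
On `[i, j]` we have `n ≤ g ≤ n + 3/2`, so each floor equals `n` or `n + 1`, the latter exactly at
the sample points `m + α`, `m + 1 - α` where `g ≥ n + 3/4`; since `g` is decreasing these are the
sample points up to the last one `p`, and there are at most `2 (p - i) + 1` of them.
A supporting line of slope `-k` at `p` lies below `g`. It falls from `g p ≥ n + 3/4` to `n` before
`Z < j + 1`, and rises by at most `1/4` from `p` back to `i + 1`; this pins `k` down. Integrating
the line up to a well chosen point `p + c` and the bound `g ≥ n` beyond it, `2 ∫ g` exceeds
`2 n (j - i)` by a quadratic expression in `p - i` and `c`, and an elementary inequality (which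
for steep lines uses that `j - i` and the count are integers) shows it dominates the count.
-/

open Set
open scoped Finset

lemma floor_add_quarter_eq {y : ℝ} {n : ℤ} (hy : y ∈ Icc (n : ℝ) (n + 3/2)) :
    ⌊y + 1/4⌋ = n + if (n : ℝ) + 3/4 ≤ y then 1 else 0 := by
  rw [Int.floor_eq_iff]
  split_ifs <;> push_cast <;> constructor <;> linarith [hy.1, hy.2]

lemma sum_floor_add_quarter (s : Finset ℤ) (f : ℤ → ℝ) (n : ℤ)
    (hf : ∀ m ∈ s, f m ∈ Icc (n : ℝ) (n + 3/2)) :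
    ∑ m ∈ s, ⌊f m + 1/4⌋ = #s * n + #{m ∈ s | (n : ℝ) + 3/4 ≤ f m} := by
  rw [Finset.sum_congr rfl fun m hm => floor_add_quarter_eq (hf m hm), Finset.sum_add_distrib,
    Finset.sum_const, Finset.sum_boole, nsmul_eq_mul]

lemma card_le_sub_add_one {s : Finset ℤ} {i : ℤ} {x : ℝ} (hx : (i : ℝ) - 1 ≤ x)
    (hs : ∀ m ∈ s, i ≤ m ∧ (m : ℝ) ≤ x) : (#s : ℝ) ≤ x - i + 1 := by
  have hsub : s ⊆ Finset.Icc i ⌊x⌋ := fun m hm =>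
    Finset.mem_Icc.mpr ⟨(hs m hm).1, Int.le_floor.mpr (hs m hm).2⟩
  have hfloor : i - 1 ≤ ⌊x⌋ := Int.le_floor.mpr (by push_cast; exact hx)
  have hcard : (#(Finset.Icc i ⌊x⌋) : ℤ) = ⌊x⌋ + 1 - i := Int.card_Icc_of_le _ _ (by omega)
  have hle : (#s : ℤ) ≤ ⌊x⌋ + 1 - i := hcard ▸ Nat.cast_le.mpr (Finset.card_le_card hsub)
  have : ((#s : ℤ) : ℝ) ≤ ((⌊x⌋ + 1 - i : ℤ) : ℝ) := Int.cast_le.mpr hle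
  push_cast at this
  linarith [Int.floor_le x]

lemma intCast_add_mem_Icc {i j m : ℤ} {t : ℝ} (hm : m ∈ Finset.Icc i (j - 1))
    (ht : t ∈ Icc (0 : ℝ) 1) : (m : ℝ) + t ∈ Icc (i : ℝ) j := by
  obtain ⟨him, hmj⟩ := Finset.mem_Icc.mp hm
  have him' : (i : ℝ) ≤ m := by exact_mod_cast him
  have hmj' : (m : ℝ) + 1 ≤ j := by exact_mod_cast (by omega : m + 1 ≤ j)
  exact ⟨by linarith [ht.1], by linarith [ht.2]⟩

lemma exists_card_filter_add_card_filter_le (P : ℝ → Prop) [DecidablePred P] {i j : ℤ} {α : ℝ}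
    (hα : α ∈ Icc (0 : ℝ) 1) (hne : ∃ m ∈ Finset.Icc i (j - 1), P (m + α) ∨ P (m + (1 - α))) :
    ∃ p ∈ Icc (i : ℝ) j, P p ∧
      ((#((Finset.Icc i (j - 1)).filter fun m : ℤ => P (m + α)) +
        #((Finset.Icc i (j - 1)).filter fun m : ℤ => P (m + (1 - α))) : ℕ) : ℝ)
        ≤ 2 * (p - i) + 1 := by
  have hα' : 1 - α ∈ Icc (0 : ℝ) 1 := ⟨by linarith [hα.2], by linarith [hα.1]⟩
  set Q : Finset ℝ := ((Finset.Icc i (j - 1)).image (fun m : ℤ => (m : ℝ) + α) ∪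
    (Finset.Icc i (j - 1)).image (fun m : ℤ => (m : ℝ) + (1 - α))).filter P
  have hQ : Q.Nonempty := by
    obtain ⟨m, hm, h | h⟩ := hne
    · exact ⟨_, Finset.mem_filter.mpr ⟨Finset.mem_union_left _ (Finset.mem_image_of_mem _ hm), h⟩⟩
    · exact ⟨_, Finset.mem_filter.mpr ⟨Finset.mem_union_right _ (Finset.mem_image_of_mem _ hm), h⟩⟩
  obtain ⟨hpQ, hPp⟩ := Finset.mem_filter.mp (Q.max'_mem hQ)
  have hp : Q.max' hQ ∈ Icc (i : ℝ) j := by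
    rcases Finset.mem_union.mp hpQ with h | h <;> obtain ⟨m, hm, hmp⟩ := Finset.mem_image.mp h <;>
      rw [← hmp]
    exacts [intCast_add_mem_Icc hm hα, intCast_add_mem_Icc hm hα']
  refine ⟨Q.max' hQ, hp, hPp, ?_⟩
  have hcard (t : ℝ) (ht : t ∈ Icc (0 : ℝ) 1)
      (hQt : ∀ m ∈ Finset.Icc i (j - 1), P (m + t) → (m : ℝ) + t ∈ Q) :
      ((#((Finset.Icc i (j - 1)).filter fun m : ℤ => P (m + t)) : ℕ) : ℝ)
        ≤ Q.max' hQ - t - i + 1 := by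
    refine card_le_sub_add_one (by linarith [hp.1, ht.2]) fun m hm => ?_
    obtain ⟨hmI, hPm⟩ := Finset.mem_filter.mp hm
    exact ⟨(Finset.mem_Icc.mp hmI).1, by linarith [Q.le_max' _ (hQt m hmI hPm)]⟩
  have h₁ := hcard α hα fun m hm h =>
    Finset.mem_filter.mpr ⟨Finset.mem_union_left _ (Finset.mem_image_of_mem _ hm), h⟩
  have h₂ := hcard (1 - α) hα' fun m hm h =>
    Finset.mem_filter.mpr ⟨Finset.mem_union_right _ (Finset.mem_image_of_mem _ hm), h⟩
  push_cast
  linarith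

/-- The slope is the infimum of the slopes of the chords to the right of `p`. -/
lemma ConvexOn.exists_affine_le {S : Set ℝ} {f : ℝ → ℝ} {p L : ℝ} (hf : ConvexOn ℝ S f)
    (hp : p ∈ S) (hS : ∃ y ∈ S, p < y) (hL : ∀ y ∈ S, p < y → L ≤ (f y - f p) / (y - p)) :
    ∃ s, L ≤ s ∧ ∀ x ∈ S, f p + s * (x - p) ≤ f x := by
  set K := (fun y => (f y - f p) / (y - p)) '' {y ∈ S | p < y}
  have hK : K.Nonempty := let ⟨y, hy, hpy⟩ := hS; ⟨_, y, ⟨hy, hpy⟩, rfl⟩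
  have hKL : ∀ r ∈ K, L ≤ r := by
    rintro _ ⟨y, ⟨hy, hpy⟩, rfl⟩
    exact hL y hy hpy
  refine ⟨sInf K, le_csInf hK hKL, fun x hx => ?_⟩
  rcases lt_trichotomy x p with hxp | rfl | hpx
  · have : (f p - f x) / (p - x) ≤ sInf K := by
      refine le_csInf hK ?_
      rintro _ ⟨y, ⟨hy, hpy⟩, rfl⟩
      exact hf.slope_mono_adjacent hx hy hxp hpy
    rw [div_le_iff₀ (by linarith)] at this
    linarith
  · simp
  · have : sInf K ≤ (f x - f p) / (x - p) := csInf_le ⟨L, hKL⟩ ⟨x, ⟨hx, hpx⟩, rfl⟩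
    rw [le_div_iff₀ (by linarith)] at this
    linarith

lemma integral_affine (y k p a c : ℝ) :
    ∫ x in a..c, (y - k * (x - p)) = y * (c - a) - k * ((c - p) ^ 2 - (a - p) ^ 2) / 2 := by
  rw [intervalIntegral.integral_sub intervalIntegrable_const
      (Continuous.intervalIntegrable (by fun_prop) _ _),
    intervalIntegral.integral_const_mul, intervalIntegral.integral_comp_sub_right (fun x => x),
    integral_id, intervalIntegral.integral_const, smul_eq_mul]
  ring

/-- Twice the area under `x ↦ 3/4 - k x` over `[-a, b]`. -/
noncomputable def trapezoidArea (k a b : ℝ) : ℝ := 3/2 * (a + b) + k * (a ^ 2 - b ^ 2)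

section Analytic

variable {g : ℝ → ℝ} {a b y : ℝ}

lemma apply_mem_Icc_of_antitoneOn (hanti : AntitoneOn g (Icc a (b + 1)))
    (hlip : ∀ z ∈ Icc a (b + 1), ∀ w ∈ Icc a (b + 1), |g z - g w| ≤ 1/2 * |z - w|)
    (h1 : g (a + 1) ≤ y + 1) (h3 : y ≤ g b) {x : ℝ} (hx : x ∈ Icc a b) :
    g x ∈ Icc y (y + 3/2) := by
  obtain ⟨hax, hxb⟩ := hx
  have hmem {z : ℝ} (h1 : a ≤ z) (h2 : z ≤ b + 1) : z ∈ Icc a (b + 1) := ⟨h1, h2⟩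
  have hstep : g a - g (a + 1) ≤ 1/2 := by
    have h := hlip a (hmem le_rfl (by linarith)) (a + 1) (hmem (by linarith) (by linarith))
    rw [show a - (a + 1) = -1 by ring, abs_neg, abs_one, mul_one] at h
    exact (le_abs_self _).trans h
  have hx := hmem hax (by linarith)
  exact ⟨h3.trans (hanti hx (hmem (by linarith) (by linarith)) hxb),
    by linarith [hanti (hmem le_rfl (by linarith)) hx hax]⟩

lemma exists_supporting_slope (hanti : AntitoneOn g (Icc a (b + 1)))
    (hconv : ConvexOn ℝ (Icc a (b + 1)) g)
    (hlip : ∀ z ∈ Icc a (b + 1), ∀ w ∈ Icc a (b + 1), |g z - g w| ≤ 1/2 * |z - w|)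
    (h1 : g (a + 1) ≤ y + 1) (hZ : ∃ z ∈ Ico a (b + 1), g z = y)
    {p : ℝ} (hp : p ∈ Icc a b) (hgp : y + 3/4 ≤ g p) :
    ∃ k, 0 < k ∧ k ≤ 1/2 ∧ 3 < 4 * k * (b - p + 1) ∧ k * (p - a - 1) ≤ 1/4 ∧
      ∀ x ∈ Icc a (b + 1), g p - k * (x - p) ≤ g x := by
  have hp' : p ∈ Icc a (b + 1) := ⟨hp.1, by linarith [hp.2]⟩
  obtain ⟨s, hs, hline⟩ := hconv.exists_affine_le (L := -(1/2)) hp'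
    ⟨b + 1, ⟨by linarith [hp.1, hp.2], le_rfl⟩, by linarith [hp.2]⟩ fun x hx hpx => by
      rw [le_div_iff₀ (by linarith)]
      have := neg_abs_le (g x - g p)
      have := hlip x hx p hp'
      rw [abs_of_pos (by linarith : 0 < x - p)] at this
      linarith
  obtain ⟨Z, hZ, hgZ⟩ := hZ
  have hZ' : Z ∈ Icc a (b + 1) := Ico_subset_Icc_self hZ
  have hpZ : p < Z := by
    by_contra! h
    linarith [hanti hZ' hp' h]
  have hsZ : 3/4 ≤ -s * (Z - p) := by linarith [hline Z hZ']
  have hs0 : 0 < -s := by nlinarith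
  refine ⟨-s, hs0, by linarith, ?_, ?_, fun x hx => by linarith [hline x hx]⟩
  · nlinarith [hZ.2]
  · linarith [hline (a + 1) ⟨by linarith, by linarith [hp.1, hp.2]⟩]

lemma sub_mul_le_integral_of_le (hab : a ≤ b) (hg : IntervalIntegrable g MeasureTheory.volume a b)
    (hlow : ∀ x ∈ Icc a b, y ≤ g x) : (b - a) * y ≤ ∫ x in a..b, g x := by
  have := intervalIntegral.integral_mono_on hab intervalIntegrable_const hg hlow
  rwa [intervalIntegral.integral_const, smul_eq_mul] at this

lemma le_integral_of_affine_le (hg : IntervalIntegrable g MeasureTheory.volume a b)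
    {c y₀ k p : ℝ} (hc : c ∈ Icc a b) (hline : ∀ x ∈ Icc a c, y₀ - k * (x - p) ≤ g x)
    (htail : ∀ x ∈ Icc c b, y ≤ g x) :
    y₀ * (c - a) - k * ((c - p) ^ 2 - (a - p) ^ 2) / 2 + y * (b - c) ≤ ∫ x in a..b, g x := by
  have hgac : IntervalIntegrable g MeasureTheory.volume a c :=
    hg.mono_set (uIcc_subset_uIcc_left (mem_uIcc_of_le hc.1 hc.2))
  have hgcb : IntervalIntegrable g MeasureTheory.volume c b :=
    hg.mono_set (uIcc_subset_uIcc_right (mem_uIcc_of_le hc.1 hc.2))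
  rw [← intervalIntegral.integral_add_adjacent_intervals hgac hgcb, ← integral_affine]
  have hhead := intervalIntegral.integral_mono_on hc.1
    (Continuous.intervalIntegrable (by fun_prop) _ _) hgac hline
  linarith [sub_mul_le_integral_of_le hc.2 hgcb htail]

lemma le_integral_of_supporting_slope (hg : IntervalIntegrable g MeasureTheory.volume a b)
    (hanti : AntitoneOn g (Icc a (b + 1))) (hconv : ConvexOn ℝ (Icc a (b + 1)) g)
    (hlip : ∀ z ∈ Icc a (b + 1), ∀ w ∈ Icc a (b + 1), |g z - g w| ≤ 1/2 * |z - w|)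
    (h1 : g (a + 1) ≤ y + 1) (hZ : ∃ z ∈ Ico a (b + 1), g z = y)
    (hlow : ∀ x ∈ Icc a b, y ≤ g x) {p : ℝ} (hp : p ∈ Icc a b) (hgp : y + 3/4 ≤ g p) :
    ∃ k, 0 < k ∧ k ≤ 1/2 ∧ 3 < 4 * k * (b - p + 1) ∧ k * (p - a - 1) ≤ 1/4 ∧
      ∀ c ∈ Icc 0 (b - p), 2 * y * (b - a) + trapezoidArea k (p - a) c ≤ 2 * ∫ x in a..b, g x := by
  obtain ⟨k, hk0, hk, hkb, hka, hline⟩ := exists_supporting_slope hanti hconv hlip h1 hZ hp hgp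
  refine ⟨k, hk0, hk, hkb, hka, fun c hc => ?_⟩
  have hint := le_integral_of_affine_le hg (c := p + c) (y₀ := g p)
    ⟨by linarith [hp.1, hc.1], by linarith [hc.2]⟩
    (fun x hx => hline x ⟨hx.1, by linarith [hx.2, hc.2]⟩)
    (fun x hx => hlow x ⟨by linarith [hx.1, hp.1, hc.1], hx.2⟩)
  unfold trapezoidArea
  nlinarith [mul_le_mul_of_nonneg_right hgp (by linarith [hp.1, hc.1] : 0 ≤ p + c - a)]

end Analytic

section Trapezoid

variable {k a m : ℝ}

lemma two_mul_add_one_le_trapezoidArea_of_mul_eq {b : ℝ} (hk0 : 0 < k) (hk : k ≤ 1/2)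
    (hkb : k * b = 3/4) : 2 * a + 1 ≤ trapezoidArea k a b := by
  unfold trapezoidArea
  have hkb2 : k * b ^ 2 = 3/4 * b := by rw [sq, ← mul_assoc, hkb]
  have : 0 ≤ k * (3/2 * (a + b) + k * (a ^ 2 - b ^ 2) - 2 * a - 1) := by
    nlinarith [sq_nonneg (k * a - 1/4)]
  linarith [(mul_nonneg_iff_of_pos_left hk0).mp this]

/-- The bound holds for `2 k (k + 1) ≤ 1`, i.e. `k ≤ (√3 - 1)/2 ≈ 0.366`; `9/25` is a rational
threshold below that. -/
lemma two_mul_add_one_le_trapezoidArea_of_le (hk0 : 0 < k) (hk : k ≤ 9/25)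
    (hkm : 4 * k * m ≤ 3) (hkm' : 3 < 4 * k * (m + 1)) :
    2 * a + 1 ≤ trapezoidArea k a m := by
  unfold trapezoidArea
  have : 0 ≤ k * (3/2 * (a + m) + k * (a ^ 2 - m ^ 2) - 2 * a - 1) := by
    nlinarith [sq_nonneg (4 * k * a - 1), mul_nonneg (by linarith : 0 ≤ 3 - 4 * k * m)
      (by linarith : 0 ≤ 4 * k * (m + 1) - 3), mul_nonneg (by linarith : 0 ≤ 9/25 - k) hk0.le]
  linarith [(mul_nonneg_iff_of_pos_left hk0).mp this]

/-- For steep lines `a + m ∈ {1, 2, 3}` and `N ≤ 4`, and each case is checked separately. -/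
lemma natCast_le_trapezoidArea_of_lt {M : ℤ} {N : ℕ} (hk : 9/25 < k) (hk' : k ≤ 1/2)
    (hkm : 4 * k * m ≤ 3) (hkm' : 3 < 4 * k * (m + 1)) (hka : k * (a - 1) ≤ 1/4)
    (hM : (M : ℝ) = a + m) (hN : (N : ℝ) ≤ 2 * a + 1) :
    N ≤ trapezoidArea k a m := by
  unfold trapezoidArea
  have hm : 1/2 < m := by nlinarith
  have ha' : a < 61/36 := by nlinarith
  have hm' : m < 75/36 := by nlinarith
  have hM1 : 1 ≤ M := by exact_mod_cast (show (0 : ℝ) < M by linarith)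
  have hM4 : M < 4 := by exact_mod_cast (show (M : ℝ) < 4 by linarith)
  have hN5 : N < 5 := by exact_mod_cast (show (N : ℝ) < 5 by linarith)
  obtain rfl : m = M - a := by linarith
  interval_cases M <;> interval_cases N <;> push_cast at hN ⊢ <;> nlinarith

lemma exists_natCast_le_trapezoidArea {M : ℤ} {N : ℕ} (hk0 : 0 < k) (hk : k ≤ 1/2)
    (hkm : 3 < 4 * k * (m + 1)) (hka : k * (a - 1) ≤ 1/4)
    (hM : (M : ℝ) = a + m) (hN : (N : ℝ) ≤ 2 * a + 1) :
    ∃ c ∈ Icc 0 m, N ≤ trapezoidArea k a c := by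
  rcases le_or_gt (3 / (4 * k)) m with hm | hm
  · refine ⟨3 / (4 * k), ⟨by positivity, hm⟩, ?_⟩
    linarith [two_mul_add_one_le_trapezoidArea_of_mul_eq (a := a) (b := 3 / (4 * k)) hk0 hk
      (by field_simp)]
  · rw [lt_div_iff₀ (by positivity), mul_comm] at hm
    refine ⟨m, ⟨by nlinarith, le_rfl⟩, ?_⟩
    rcases le_or_gt k (9/25) with hk' | hk'
    · linarith [two_mul_add_one_le_trapezoidArea_of_le (a := a) hk0 hk' hm.le hkm]
    · exact natCast_le_trapezoidArea_of_lt hk' hk hm.le hkm hka hM hN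

end Trapezoid

theorem lattice_count_lemma_general
    (i j : ℤ) (hij : i < j) (α : ℝ) (hα : α ∈ Set.Icc (0:ℝ) (1/2))
    (n : ℤ) (g : ℝ → ℝ)
    (hanti : AntitoneOn g (Set.Icc (i:ℝ) (j+1)))
    (hconv : ConvexOn ℝ (Set.Icc (i:ℝ) (j+1)) g)
    (hlip : ∀ z ∈ Set.Icc (i:ℝ) (j+1), ∀ w ∈ Set.Icc (i:ℝ) (j+1),
      |g z - g w| ≤ (1/2) * |z - w|)
    (h1 : g (i+1) ≤ n + 1) (h3 : (n:ℝ) ≤ g (j:ℝ))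
    (hZ : ∃ z ∈ Set.Ico (i:ℝ) ((j:ℝ)+1), g z = n) :
    ((∑ m ∈ Finset.Icc i (j-1),
        (⌊g ((m:ℝ) + α) + 1/4⌋ + ⌊g ((m:ℝ) + (1 - α)) + 1/4⌋) : ℤ) : ℝ)
      ≤ 2 * ∫ z in (i:ℝ)..(j:ℝ), g z := by
  have hα₁ : α ∈ Icc (0 : ℝ) 1 := ⟨hα.1, by linarith [hα.2]⟩
  have hα₂ : 1 - α ∈ Icc (0 : ℝ) 1 := ⟨by linarith [hα.2], by linarith [hα.1]⟩
  have hij' : (i : ℝ) + 1 ≤ j := by exact_mod_cast hij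
  have hrange (x : ℝ) (hx : x ∈ Icc (i : ℝ) j) :=
    apply_mem_Icc_of_antitoneOn hanti hlip h1 h3 hx
  have hg : IntervalIntegrable g MeasureTheory.volume i j := (hanti.mono <| by
    rw [uIcc_of_le (by linarith)]; exact Icc_subset_Icc_right (by linarith)).intervalIntegrable
  have hcard : (#(Finset.Icc i (j - 1)) : ℤ) = j - i := by
    rw [Int.card_Icc_of_le _ _ (by omega)]; ring
  rw [Finset.sum_add_distrib,
    sum_floor_add_quarter _ _ _ fun m hm => hrange _ (intCast_add_mem_Icc hm hα₁),
    sum_floor_add_quarter _ _ _ fun m hm => hrange _ (intCast_add_mem_Icc hm hα₂), hcard]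
  by_cases hne : ∃ m ∈ Finset.Icc i (j - 1),
      (n : ℝ) + 3/4 ≤ g (m + α) ∨ (n : ℝ) + 3/4 ≤ g (m + (1 - α))
  · obtain ⟨p, hp, hgp, hcount⟩ :=
      exists_card_filter_add_card_filter_le (fun x => (n : ℝ) + 3/4 ≤ g x) hα₁ hne
    obtain ⟨k, hk0, hk, hkb, hka, hint⟩ := le_integral_of_supporting_slope hg hanti hconv hlip h1
      hZ (fun x hx => (hrange x hx).1) hp hgp
    obtain ⟨c, hc, hcount'⟩ := exists_natCast_le_trapezoidArea (M := j - i) hk0 hk hkb hka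
      (by push_cast; ring) hcount
    push_cast at hcount' ⊢
    linarith [hint c hc]
  · push Not at hne
    rw [Finset.filter_false_of_mem fun m hm => (hne m hm).1.not_ge,
      Finset.filter_false_of_mem fun m hm => (hne m hm).2.not_ge]
    simp only [Finset.card_empty]
    push_cast
    linarith [sub_mul_le_integral_of_le (by linarith) hg fun x hx => (hrange x hx).1]

theorem lattice_count_lemma
    (i j : ℤ) (hij : i < j) (α : ℝ) (hα : α ∈ Set.Icc (0:ℝ) (1/2))
    (n : ℤ) (g : ℝ → ℝ)
    (hanti : AntitoneOn g (Set.Icc (i:ℝ) (j+1)))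
    (hconv : ConvexOn ℝ (Set.Icc (i:ℝ) (j+1)) g)
    (hlip : ∀ z ∈ Set.Icc (i:ℝ) (j+1), ∀ w ∈ Set.Icc (i:ℝ) (j+1),
      |g z - g w| ≤ (1/2) * |z - w|)
    (h1 : g (i+1) ≤ n + 1) (h2 : g (j:ℝ) ≤ g (i+1)) (h3 : (n:ℝ) ≤ g (j:ℝ))
    (h4 : g (j+1) ≤ n)
    (hZ : ∃ z ∈ Set.Ico (i:ℝ) ((j:ℝ)+1), g z = n) :
    ((∑ m ∈ Finset.Icc i (j-1),
        (⌊g ((m:ℝ) + α) + 1/4⌋ + ⌊g ((m:ℝ) + (1 - α)) + 1/4⌋) : ℤ) : ℝ)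
      ≤ 2 * ∫ z in (i:ℝ)..(j:ℝ), g z :=
  lattice_count_lemma_general i j hij α hα n g hanti hconv hlip h1 h3 hZ
end

section
/- Let b ∈ ℕ, α ∈ [0, 1/2], and let g be a nonnegative, decreasing, convex function on [0, b] with g(b) = 0 satisfying |g(z) − g(w)| ≤ (1/2)|z − w| for all z, w ∈ [0, b]. Then ∑_{m=0}^{b−1} (⌊g(m+α) + 1/4⌋ + ⌊g(m+1−α) + 1/4⌋) ≤ 2∫₀^b g(z) dz. -/
/-!
`⌊y + 1/4⌋` counts the levels `j + 3/4 ≤ y` with `j : ℕ`, while `y ≥ ∑ⱼ clampUnit (y - j)` for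
`y ≥ 0`; so it suffices to compare, level by level, the number of samples `m + α`, `m + 1 - α`
with `g ≥ t + 3/4` against twice `∫ clampUnit (g - t)`. These samples all lie left of the last
point `u` with `g u ≥ t + 3/4`, so there are at most `2u + 1` of them. A supporting line of the
convex `g` at `u` has slope in `[-1/2, 0)`, so it falls to height `t + 1/2` only at some
`v ≥ u + 1/2`. Under `clampUnit (· - t)` that line becomes symmetric about `v`, with integral
`v` over `[0, 2v]`, and stays below the layer `clampUnit (g - t)`.
-/

open Finset MeasureTheory intervalIntegral

noncomputable def clampUnit (y : ℝ) : ℝ := max 0 (min y 1)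

@[fun_prop]
lemma continuous_clampUnit : Continuous clampUnit := by
  unfold clampUnit; fun_prop

lemma monotone_clampUnit : Monotone clampUnit :=
  fun _ _ h => max_le_max le_rfl (min_le_min_right 1 h)

lemma clampUnit_nonneg (y : ℝ) : 0 ≤ clampUnit y := le_max_left _ _

lemma clampUnit_of_nonpos {y : ℝ} (hy : y ≤ 0) : clampUnit y = 0 :=
  max_eq_left ((min_le_left _ _).trans hy)

lemma clampUnit_half_add_add_clampUnit_half_sub (t : ℝ) :
    clampUnit (1/2 + t) + clampUnit (1/2 - t) = 1 := by
  simp only [clampUnit, max_def, min_def]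
  split_ifs <;> linarith

lemma sum_range_clampUnit_sub {y : ℝ} (hy : 0 ≤ y) (K : ℕ) :
    ∑ j ∈ range K, clampUnit (y - j) = min y K := by
  induction K with
  | zero => simp [hy]
  | succ K ih =>
    rw [sum_range_succ, ih]
    push_cast
    simp only [clampUnit, max_def, min_def]
    split_ifs <;> linarith

theorem sum_integral_clampUnit_sub_le {g : ℝ → ℝ} {a b : ℝ} (hab : a ≤ b)
    (hg : ContinuousOn g (Set.Icc a b)) (hnonneg : ∀ x ∈ Set.Icc a b, 0 ≤ g x) (K : ℕ) :
    ∑ j ∈ range K, ∫ x in a..b, clampUnit (g x - j) ≤ ∫ x in a..b, g x := by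
  have hint : ∀ j ∈ range K, IntervalIntegrable (fun x => clampUnit (g x - j)) volume a b :=
    fun j _ => (continuous_clampUnit.comp_continuousOn
      (hg.sub continuousOn_const)).intervalIntegrable_of_Icc hab
  rw [← integral_finsetSum hint]
  refine integral_mono_on hab (by simpa only [sum_fn] using IntervalIntegrable.sum _ hint)
    (hg.intervalIntegrable_of_Icc hab) fun x hx => ?_
  rw [sum_range_clampUnit_sub (hnonneg x hx)]
  exact min_le_left _ _

lemma intCast_floor_add_quarter_eq_card {y : ℝ} (hy : 0 ≤ y) {K : ℕ} (hK : ⌊y + 1/4⌋₊ ≤ K) :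
    ((⌊y + 1/4⌋ : ℤ) : ℝ) = #{j ∈ range K | (j : ℕ) + 3/4 ≤ y} := by
  have hfilter : {j ∈ range K | (j : ℕ) + 3/4 ≤ y} = range ⌊y + 1/4⌋₊ := by
    ext j
    have hlevel : (j : ℝ) + 3/4 ≤ y ↔ j < ⌊y + 1/4⌋₊ := by
      rw [Nat.lt_iff_add_one_le, Nat.le_floor_iff' j.succ_ne_zero, Nat.cast_add_one]
      constructor <;> intro <;> linarith
    simp only [mem_filter, mem_range, hlevel]
    omega
  rw [hfilter, card_range, ← Int.natCast_floor_eq_floor (by linarith), Int.cast_natCast]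

lemma intCast_sum_floor_add_quarter_eq {ι : Type*} (s : Finset ι) {y : ι → ℝ} {c : ℝ}
    (hy : ∀ i ∈ s, 0 ≤ y i) (hc : ∀ i ∈ s, y i ≤ c) :
    ∑ i ∈ s, ((⌊y i + 1/4⌋ : ℤ) : ℝ)
      = ∑ j ∈ range ⌊c + 1/4⌋₊, (#{i ∈ s | (j : ℕ) + 3/4 ≤ y i} : ℝ) := by
  rw [sum_congr rfl fun i hi => intCast_floor_add_quarter_eq_card (hy i hi)
    (Nat.floor_le_floor (by linarith [hc i hi] : y i + 1/4 ≤ c + 1/4))]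
  simp only [natCast_card_filter]
  exact sum_comm

theorem integral_eq_half_of_add_comp_sub {f : ℝ → ℝ} (hf : Continuous f) {a b : ℝ}
    (hsym : ∀ x, f x + f (a + b - x) = 1) : ∫ x in a..b, f x = (b - a) / 2 := by
  have hreflect : ∫ x in a..b, f (a + b - x) = ∫ x in a..b, f x := by
    simp [integral_comp_sub_left f (a + b)]
  have hsum : ∫ x in a..b, (f x + f (a + b - x)) = b - a := by simp [hsym]
  have hf' : Continuous fun x => f (a + b - x) := by fun_prop
  rw [integral_add (hf.intervalIntegrable a b) (hf'.intervalIntegrable a b), hreflect] at hsum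
  linarith

theorem integral_clampUnit_affine (k v : ℝ) :
    ∫ x in (0:ℝ)..2 * v, clampUnit (1/2 + k * (x - v)) = v := by
  rw [integral_eq_half_of_add_comp_sub (by fun_prop)]
  · ring
  · intro x
    convert clampUnit_half_add_add_clampUnit_half_sub (k * (x - v)) using 3
    ring

theorem le_integral_clampUnit_of_affine_le {h : ℝ → ℝ} {b k v : ℝ} (hb : 0 ≤ b)
    (hh : ContinuousOn h (Set.Icc 0 b)) (hk : k ≤ 0) (hvb : 1/2 + k * (b - v) ≤ 0)
    (hle : ∀ x ∈ Set.Icc 0 b, 1/2 + k * (x - v) ≤ h x) :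
    v ≤ ∫ x in (0:ℝ)..b, clampUnit (h x) := by
  set ψ : ℝ → ℝ := fun x => clampUnit (1/2 + k * (x - v))
  have hψ : Continuous ψ := by fun_prop
  have htail : 0 ≤ ∫ x in 2 * v..b, ψ x := by
    rcases le_total (2 * v) b with h2vb | hb2v
    · exact integral_nonneg h2vb fun x _ => clampUnit_nonneg _
    · -- beyond `b` the line is nonpositive, so `ψ` vanishes on `[b, 2v]`
      rw [integral_symm, neg_nonneg]
      refine (integral_mono_on hb2v (hψ.intervalIntegrable _ _) intervalIntegrable_const
        fun x hx => (clampUnit_of_nonpos ?_).le).trans_eq (by simp)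
      nlinarith [hx.1]
  calc v = ∫ x in (0:ℝ)..2 * v, ψ x := (integral_clampUnit_affine k v).symm
    _ ≤ ∫ x in (0:ℝ)..b, ψ x := by
      rw [← integral_add_adjacent_intervals (hψ.intervalIntegrable 0 (2 * v))
        (hψ.intervalIntegrable (2 * v) b)]
      linarith
    _ ≤ ∫ x in (0:ℝ)..b, clampUnit (h x) :=
      integral_mono_on hb (hψ.intervalIntegrable _ _)
        ((continuous_clampUnit.comp_continuousOn hh).intervalIntegrable_of_Icc hb)
        fun x hx => monotone_clampUnit (hle x hx)

theorem ConvexOn.exists_affine_le_s12 {S : Set ℝ} {f : ℝ → ℝ} (hf : ConvexOn ℝ S f) {u y₀ c : ℝ}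
    (hu : u ∈ S) (hy₀ : y₀ ∈ S) (huy₀ : u < y₀)
    (hc : ∀ y ∈ S, u < y → c ≤ slope f u y) :
    ∃ k, c ≤ k ∧ ∀ x ∈ S, f u + k * (x - u) ≤ f x := by
  set R := slope f u '' {y | y ∈ S ∧ u < y}
  have hR : R.Nonempty := ⟨_, y₀, ⟨hy₀, huy₀⟩, rfl⟩
  have hRc : c ∈ lowerBounds R := by
    rintro _ ⟨y, ⟨hy, huy⟩, rfl⟩; exact hc y hy huy
  refine ⟨sInf R, le_csInf hR hRc, fun x hx => ?_⟩
  rcases lt_trichotomy x u with hxu | rfl | hux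
  · have hslope : slope f x u ≤ sInf R := by
      refine le_csInf hR ?_
      rintro _ ⟨y, ⟨hy, huy⟩, rfl⟩
      rw [slope_def_field, slope_def_field]
      exact hf.slope_mono_adjacent hx hy hxu huy
    rw [slope_def_field, div_le_iff₀ (sub_pos.2 hxu)] at hslope
    linarith
  · simp
  · have hslope : sInf R ≤ slope f u x := csInf_le ⟨c, hRc⟩ ⟨x, ⟨hx, hux⟩, rfl⟩
    rw [slope_def_field, le_div_iff₀ (sub_pos.2 hux)] at hslope
    linarith

lemma card_filter_range_natCast_le (N : ℕ) {x : ℝ} (hx : -1 ≤ x) :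
    (#{m ∈ range N | (m : ℕ) ≤ x} : ℝ) ≤ x + 1 := by
  rcases lt_or_ge x 0 with hx0 | hx0
  · have hempty : {m ∈ range N | (m : ℕ) ≤ x} = ∅ :=
      filter_eq_empty_iff.2 fun m _ => not_le.2 (hx0.trans_le m.cast_nonneg)
    simp only [hempty, card_empty, Nat.cast_zero]
    linarith
  · have hsub : {m ∈ range N | (m : ℕ) ≤ x} ⊆ range (⌊x⌋₊ + 1) := fun m hm => by
      simp only [mem_filter, mem_range] at hm ⊢
      exact Nat.lt_succ_of_le (Nat.le_floor hm.2)
    calc (#{m ∈ range N | (m : ℕ) ≤ x} : ℝ) ≤ ⌊x⌋₊ + 1 := by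
          exact_mod_cast (card_le_card hsub).trans (card_range _).le
      _ ≤ x + 1 := by linarith [Nat.floor_le hx0]

lemma natCast_add_mem_Icc {b m : ℕ} (hm : m ∈ range b) {β : ℝ} (hβ : β ∈ Set.Icc (0:ℝ) 1) :
    (m:ℝ) + β ∈ Set.Icc (0:ℝ) b := by
  have : (m:ℝ) + 1 ≤ b := by exact_mod_cast mem_range.1 hm
  exact ⟨by linarith [m.cast_nonneg (α := ℝ), hβ.1], by linarith [hβ.2]⟩

theorem card_sample_le_two_mul_integral {g : ℝ → ℝ} {b : ℕ} {α t x₀ : ℝ}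
    (hα : α ∈ Set.Icc (0:ℝ) 1) (hconv : ConvexOn ℝ (Set.Icc 0 (b:ℝ)) g)
    (hlip : LipschitzOnWith (1/2) g (Set.Icc 0 (b:ℝ))) (hb : g b ≤ t)
    (hx₀ : x₀ ∈ Set.Icc 0 (b:ℝ)) (hgx₀ : t + 3/4 ≤ g x₀) :
    (#{m ∈ range b | t + 3/4 ≤ g ((m : ℕ) + α)}
        + #{m ∈ range b | t + 3/4 ≤ g ((m : ℕ) + (1 - α))} : ℝ)
      ≤ 2 * ∫ x in (0:ℝ)..b, clampUnit (g x - t) := by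
  set I := Set.Icc (0:ℝ) b
  have hgc : ContinuousOn g I := hlip.continuousOn
  have hbI : (b:ℝ) ∈ I := ⟨b.cast_nonneg, le_rfl⟩
  obtain ⟨u, ⟨huI, hgu : t + 3/4 ≤ g u⟩, hu_max⟩ :
      ∃ u, IsGreatest (I ∩ g ⁻¹' Set.Ici (t + 3/4)) u :=
    (isCompact_Icc.of_isClosed_subset
      (hgc.preimage_isClosed_of_isClosed isClosed_Icc isClosed_Ici)
      Set.inter_subset_left).exists_isGreatest ⟨x₀, hx₀, hgx₀⟩
  have hub : u < b := huI.2.lt_of_ne (by rintro rfl; linarith)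
  obtain ⟨k, hk, hkle⟩ := hconv.exists_affine_le_s12 huI hbI hub (c := -1/2) fun y hy huy => by
    have hdist := hlip.dist_le_mul u huI y hy
    rw [Real.dist_eq, Real.dist_eq, abs_of_neg (sub_neg.2 huy)] at hdist
    rw [slope_def_field, le_div_iff₀ (sub_pos.2 huy)]
    push_cast at hdist
    linarith [le_abs_self (g u - g y)]
  have hk0 : k < 0 := by nlinarith [hkle b hbI]
  -- the supporting line at `u` reaches height `t + 1/2` at `v`
  set v := u + (g u - t - 1/2) / (-k) with hv_def
  have hkv : k * (v - u) = 1/2 - (g u - t) := by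
    rw [hv_def, add_sub_cancel_left, div_neg, mul_neg, mul_div_cancel₀ _ hk0.ne]
    ring
  have huv : u + 1/2 ≤ v := by
    have : 1/2 ≤ (g u - t - 1/2) / (-k) := by rw [le_div_iff₀ (by linarith)]; nlinarith
    linarith
  have hv : v ≤ ∫ x in (0:ℝ)..b, clampUnit (g x - t) :=
    le_integral_clampUnit_of_affine_le b.cast_nonneg (hgc.sub continuousOn_const) hk0.le
      (by linarith [hkle b hbI]) fun x hx => by linarith [hkle x hx]
  have hcount : ∀ β ∈ Set.Icc (0:ℝ) 1,
      (#{m ∈ range b | t + 3/4 ≤ g ((m : ℕ) + β)} : ℝ) ≤ u - β + 1 := by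
    intro β hβ
    refine le_trans ?_ (card_filter_range_natCast_le b (by linarith [huI.1, hβ.2]))
    refine Nat.cast_le.2 (card_le_card fun m => ?_)
    simp only [mem_filter]
    rintro ⟨hm, hgm⟩
    exact ⟨hm, by linarith [hu_max ⟨natCast_add_mem_Icc hm hβ, hgm⟩]⟩
  have h1 := hcount α hα
  have h2 := hcount (1 - α) ⟨by linarith [hα.2], by linarith [hα.1]⟩
  linarith

theorem lattice_count_theorem
    (b : ℕ) (α : ℝ) (hα : α ∈ Set.Icc (0:ℝ) (1/2)) (g : ℝ → ℝ)
    (hnonneg : ∀ z ∈ Set.Icc (0:ℝ) (b:ℝ), 0 ≤ g z)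
    (hanti : AntitoneOn g (Set.Icc (0:ℝ) (b:ℝ)))
    (hconv : ConvexOn ℝ (Set.Icc (0:ℝ) (b:ℝ)) g)
    (hb : g (b:ℝ) = 0)
    (hlip : ∀ z ∈ Set.Icc (0:ℝ) (b:ℝ), ∀ w ∈ Set.Icc (0:ℝ) (b:ℝ),
      |g z - g w| ≤ (1/2) * |z - w|) :
    ((∑ m ∈ Finset.range b,
        (⌊g ((m:ℝ) + α) + 1/4⌋ + ⌊g ((m:ℝ) + (1 - α)) + 1/4⌋) : ℤ) : ℝ)
      ≤ 2 * ∫ z in (0:ℝ)..(b:ℝ), g z := by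
  have hα' : α ∈ Set.Icc (0:ℝ) 1 := ⟨hα.1, hα.2.trans (by norm_num)⟩
  have hlip' : LipschitzOnWith (1/2) g (Set.Icc 0 (b:ℝ)) :=
    LipschitzOnWith.of_dist_le_mul fun x hx y hy => by simpa [Real.dist_eq] using hlip x hx y hy
  have h0 : (0:ℝ) ∈ Set.Icc 0 (b:ℝ) := ⟨le_rfl, b.cast_nonneg⟩
  set K := ⌊g 0 + 1/4⌋₊
  have hsamples : ∀ β ∈ Set.Icc (0:ℝ) 1, ∑ m ∈ range b, ((⌊g (m + β) + 1/4⌋ : ℤ) : ℝ)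
      = ∑ j ∈ range K, (#{m ∈ range b | (j : ℕ) + 3/4 ≤ g ((m : ℕ) + β)} : ℝ) := fun β hβ =>
    intCast_sum_floor_add_quarter_eq _ (fun m hm => hnonneg _ (natCast_add_mem_Icc hm hβ))
      fun m hm => hanti h0 (natCast_add_mem_Icc hm hβ) (natCast_add_mem_Icc hm hβ).1
  have hlevel : ∀ j ∈ range K,
      (#{m ∈ range b | (j : ℕ) + 3/4 ≤ g ((m : ℕ) + α)}
        + #{m ∈ range b | (j : ℕ) + 3/4 ≤ g ((m : ℕ) + (1 - α))} : ℝ)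
        ≤ 2 * ∫ x in (0:ℝ)..b, clampUnit (g x - j) := fun j hj => by
    have hj : ((j + 1 : ℕ) : ℝ) ≤ g 0 + 1/4 :=
      (Nat.le_floor_iff' j.succ_ne_zero).1 (mem_range.1 hj)
    push_cast at hj
    exact card_sample_le_two_mul_integral hα' hconv hlip' (by rw [hb]; exact j.cast_nonneg) h0
      (by linarith)
  push_cast
  rw [sum_add_distrib, hsamples α hα', hsamples (1 - α) ⟨by linarith [hα.2], by linarith [hα.1]⟩,
    ← sum_add_distrib]
  calc _ ≤ ∑ j ∈ range K, 2 * ∫ x in (0:ℝ)..b, clampUnit (g x - j) := sum_le_sum hlevel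
    _ ≤ 2 * ∫ z in (0:ℝ)..b, g z := by
      rw [← mul_sum]
      gcongr
      exact sum_integral_clampUnit_sub_le b.cast_nonneg hlip'.continuousOn hnonneg K
end
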